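/- For every positive integer n and every complex m with Im(m) > 0, complex a, and complex k, ∑_{j=0}^{2n} (−1)^{j(1/(2n+1)+1)} Φ(−e^{i(2πj/(2n+1)+m)}, −k, a) = (−1)^n (2n+1)^{k+1} e^{imn} Φ(−e^{im(2n+1)}, −k, (a+n)/(2n+1)), where (−1)^{j(1/(2n+1)+1)} means e^{iπj(1/(2n+1)+1)} and Re(a) > 0. -/

import Mathlib

open Complex Finset

/-- The Hurwitz-Lerch zeta function, defined by its series. -/
noncomputable def lerchPhi (z s a : ℂ) : ℂ := ∑' y : ℕ, z ^ y / ((y : ℂ) + a) ^ s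

lemma summable_lerch (z a k : ℂ) (hz : ‖z‖ < 1) (ha : 0 < a.re) :
    Summable fun y : ℕ => z ^ y / ((y : ℂ) + a) ^ (-k) := by
  have hne : ∀ y : ℕ, ((y : ℂ) + a) ≠ 0 := by
    intro y h
    have h2 : ((y : ℂ) + a).re = y + a.re := by simp
    rw [h] at h2
    simp at h2
    have : (0:ℝ) ≤ (y:ℝ) := y.cast_nonneg
    linarith
  set K : ℕ := ⌈|k.re|⌉₊ with hK
  set c : ℝ := min a.re 1 with hc
  have hc0 : 0 < c := lt_min ha one_pos
  have hc1 : c ≤ 1 := min_le_right _ _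
  set C : ℝ := Real.exp (Real.pi * |k.im|) * (c⁻¹) ^ K * (1 + ‖a‖) ^ K * 2 ^ K with hC
  have hmaj : Summable fun y : ℕ => C * (‖z‖ ^ y + (y : ℝ) ^ K * ‖z‖ ^ y) := by
    refine Summable.mul_left C ?_
    exact (summable_geometric_of_lt_one (norm_nonneg z) hz).add
      (summable_pow_mul_geometric_of_norm_lt_one K (by simpa using hz))
  refine Summable.of_norm_bounded hmaj ?_
  intro y
  set x : ℂ := (y : ℂ) + a with hx
  have hxne : x ≠ 0 := hne y
  have hterm : z ^ y / x ^ (-k) = z ^ y * x ^ k := by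
    rw [cpow_neg]; field_simp
  rw [hterm, norm_mul, norm_pow]
  have ha0 : (0:ℝ) ≤ ‖a‖ := norm_nonneg a
  have hy0 : (0:ℝ) ≤ (y:ℝ) := y.cast_nonneg
  have harg : ‖x ^ k‖ ≤ ‖x‖ ^ k.re * Real.exp (Real.pi * |k.im|) := by
    rw [Complex.norm_cpow_of_ne_zero hxne, div_eq_mul_inv, ← Real.exp_neg]
    refine mul_le_mul_of_nonneg_left (Real.exp_le_exp.2 ?_) (Real.rpow_nonneg (norm_nonneg x) _)
    calc -(x.arg * k.im) ≤ |x.arg * k.im| := neg_le_abs _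
      _ = |x.arg| * |k.im| := abs_mul _ _
      _ ≤ Real.pi * |k.im| := by
          have := Complex.abs_arg_le_pi x
          have := abs_nonneg k.im
          nlinarith [Complex.abs_arg_le_pi x]
  have hxB : ‖x‖ ≤ (1 + ‖a‖) * ((y:ℝ) + 1) := by
    calc ‖x‖ ≤ ‖(y:ℂ)‖ + ‖a‖ := norm_add_le _ _
      _ = (y:ℝ) + ‖a‖ := by simp
      _ ≤ (1 + ‖a‖) * ((y:ℝ) + 1) := by nlinarith
  have hB1 : (1:ℝ) ≤ (1 + ‖a‖) * ((y:ℝ) + 1) := by nlinarith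
  have hcx : c ≤ ‖x‖ := by
    have h1 : x.re ≤ ‖x‖ := Complex.re_le_norm x
    have h2 : x.re = (y:ℝ) + a.re := by simp [hx]
    have h3 : c ≤ a.re := min_le_left _ _
    linarith
  have hKs : |k.re| ≤ (K:ℝ) := Nat.le_ceil _
  have hcinv1 : (1:ℝ) ≤ c⁻¹ := (one_le_inv₀ hc0).2 hc1
  have hrp : ‖x‖ ^ k.re ≤ c⁻¹ ^ K * ((1 + ‖a‖) * ((y:ℝ) + 1)) ^ K := by
    rcases le_or_gt 0 k.re with hs | hs
    · calc ‖x‖ ^ k.re ≤ ((1 + ‖a‖) * ((y:ℝ) + 1)) ^ k.re :=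
            Real.rpow_le_rpow (norm_nonneg x) hxB hs
        _ ≤ ((1 + ‖a‖) * ((y:ℝ) + 1)) ^ (K:ℝ) :=
            Real.rpow_le_rpow_of_exponent_le hB1 (le_trans (le_abs_self _) hKs)
        _ = ((1 + ‖a‖) * ((y:ℝ) + 1)) ^ K := Real.rpow_natCast _ K
        _ ≤ _ := le_mul_of_one_le_left (pow_nonneg (by linarith) K) (one_le_pow₀ hcinv1)
    · calc ‖x‖ ^ k.re ≤ c ^ k.re := Real.rpow_le_rpow_of_nonpos hc0 hcx hs.le
        _ ≤ c ^ (-(K:ℝ)) := Real.rpow_le_rpow_of_exponent_ge hc0 hc1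
            (by have := neg_abs_le k.re; linarith)
        _ = c⁻¹ ^ K := by rw [Real.rpow_neg hc0.le, Real.rpow_natCast, ← inv_pow]
        _ ≤ _ := le_mul_of_one_le_right (pow_nonneg (by positivity) K) (one_le_pow₀ hB1)
  have hmax : ((y:ℝ) + 1) ^ K ≤ 2 ^ K * (1 + (y:ℝ) ^ K) := by
    have h1 : (y:ℝ) + 1 ≤ 2 * max 1 (y:ℝ) := by
      rcases le_total 1 (y:ℝ) with h | h
      · rw [max_eq_right h]; linarith
      · rw [max_eq_left h]; linarith
    calc ((y:ℝ) + 1) ^ K ≤ (2 * max 1 (y:ℝ)) ^ K := pow_le_pow_left₀ (by positivity) h1 K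
      _ = 2 ^ K * (max 1 (y:ℝ)) ^ K := mul_pow _ _ _
      _ ≤ 2 ^ K * (1 + (y:ℝ) ^ K) := by
          have : (max 1 (y:ℝ)) ^ K ≤ 1 + (y:ℝ) ^ K := by
            rcases le_total 1 (y:ℝ) with h | h
            · rw [max_eq_right h]; nlinarith [pow_nonneg hy0 K]
            · rw [max_eq_left h, one_pow]; nlinarith [pow_nonneg hy0 K]
          nlinarith [pow_nonneg (by norm_num : (0:ℝ) ≤ 2) K]
  have key : ‖x ^ k‖ ≤ C * (1 + (y:ℝ) ^ K) := by
    calc ‖x ^ k‖ ≤ ‖x‖ ^ k.re * Real.exp (Real.pi * |k.im|) := harg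
      _ ≤ (c⁻¹ ^ K * ((1 + ‖a‖) * ((y:ℝ) + 1)) ^ K) * Real.exp (Real.pi * |k.im|) :=
          mul_le_mul_of_nonneg_right hrp (Real.exp_nonneg _)
      _ = (Real.exp (Real.pi * |k.im|) * c⁻¹ ^ K * (1 + ‖a‖) ^ K) * ((y:ℝ) + 1) ^ K := by
          rw [mul_pow]; ring
      _ ≤ (Real.exp (Real.pi * |k.im|) * c⁻¹ ^ K * (1 + ‖a‖) ^ K) * (2 ^ K * (1 + (y:ℝ) ^ K)) := by
          refine mul_le_mul_of_nonneg_left hmax ?_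
          positivity
      _ = C * (1 + (y:ℝ) ^ K) := by rw [hC]; ring
  have hre : C * (‖z‖ ^ y + (y:ℝ) ^ K * ‖z‖ ^ y) = ‖z‖ ^ y * (C * (1 + (y:ℝ) ^ K)) := by ring
  rw [hre]
  exact mul_le_mul_of_nonneg_left key (pow_nonneg (norm_nonneg z) y)

lemma cpow_real_mul (r : ℝ) (hr : 0 < r) (z : ℂ) (hz : z ≠ 0) (k : ℂ) :
    ((r : ℂ) * z) ^ k = (r : ℂ) ^ k * z ^ k := by
  have hr0 : (r : ℂ) ≠ 0 := ofReal_ne_zero.2 hr.ne'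
  rw [cpow_def_of_ne_zero (mul_ne_zero hr0 hz), cpow_def_of_ne_zero hr0,
    cpow_def_of_ne_zero hz, Complex.log_ofReal_mul hr hz, Complex.ofReal_log hr.le,
    add_mul, Complex.exp_add]

theorem lerch_functional_equation_general (n : ℕ) (hn : 0 < n) (m a k : ℂ)
    (hm : 0 < m.im) (ha : 0 < a.re) :
    ∑ j ∈ Finset.range (2 * n + 1),
      Complex.exp (Real.pi * I * j * (1 / (2 * n + 1) + 1)) *
        lerchPhi (-Complex.exp (I * (2 * Real.pi * j / (2 * n + 1) + m))) (-k) a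
    = (-1 : ℂ) ^ n * ((2 * n + 1 : ℂ)) ^ (k + 1) * Complex.exp (I * m * n) *
        lerchPhi (-Complex.exp (I * m * (2 * n + 1))) (-k) ((a + n) / (2 * n + 1)) := by
  have hπ : (Real.pi : ℂ) ≠ 0 := ofReal_ne_zero.2 Real.pi_ne_zero
  have hNn : ((2 * n + 1 : ℕ) : ℂ) = 2 * (n : ℂ) + 1 := by push_cast; ring
  have hN0 : (2 * (n : ℂ) + 1) ≠ 0 := by
    rw [← hNn]; exact Nat.cast_ne_zero.2 (by omega)
  -- norms
  have hznorm : ∀ j : ℕ,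
      ‖-Complex.exp (I * (2 * Real.pi * j / (2 * n + 1) + m))‖ < 1 := by
    intro j
    have hθ : (2 * (Real.pi : ℂ) * j / (2 * (n : ℂ) + 1)) =
        ((2 * Real.pi * j / (2 * n + 1) : ℝ) : ℂ) := by push_cast; ring
    rw [norm_neg, Complex.norm_exp]
    have : (I * (2 * (Real.pi : ℂ) * j / (2 * (n : ℂ) + 1) + m)).re = -m.im := by
      rw [I_mul_re, hθ, Complex.add_im, Complex.ofReal_im, zero_add]
    rw [this]
    exact Real.exp_lt_one_iff.2 (by linarith)
  have hznorm2 : ‖-Complex.exp (I * m * (2 * (n : ℂ) + 1))‖ < 1 := by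
    rw [norm_neg, Complex.norm_exp]
    have h2 : (I * m * (2 * (n : ℂ) + 1)).re = -(m.im * (2 * n + 1)) := by
      have : I * m * (2 * (n : ℂ) + 1) = I * (m * (((2 * n + 1 : ℝ)) : ℂ)) := by
        push_cast; ring
      rw [this, I_mul_re, Complex.mul_im]
      simp
    rw [h2]
    refine Real.exp_lt_one_iff.2 ?_
    have : (0:ℝ) < 2 * n + 1 := by positivity
    nlinarith
  -- the function obtained after summing over j
  set F : ℕ → ℂ := fun y =>
    (if (2 * n + 1) ∣ (y + n + 1) then ((2 * n + 1 : ℕ) : ℂ) else 0) *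
      ((-1 : ℂ) ^ y * Complex.exp (I * m * y)) / ((y : ℂ) + a) ^ (-k) with hF
  -- step 2 : pointwise evaluation of the finite sum
  have step2 : ∀ y : ℕ,
      (∑ j ∈ Finset.range (2 * n + 1),
        Complex.exp (Real.pi * I * j * (1 / (2 * (n : ℂ) + 1) + 1)) *
          ((-Complex.exp (I * (2 * Real.pi * j / (2 * (n : ℂ) + 1) + m))) ^ y /
            ((y : ℂ) + a) ^ (-k))) = F y := by
    intro y
    set q : ℂ := Complex.exp (2 * Real.pi * I * ((y : ℂ) + n + 1) / (2 * (n : ℂ) + 1)) with hqdef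
    have hq : ∀ j : ℕ,
        Complex.exp (Real.pi * I * j * (1 / (2 * (n : ℂ) + 1) + 1)) *
          (-Complex.exp (I * (2 * Real.pi * j / (2 * (n : ℂ) + 1) + m))) ^ y
        = ((-1 : ℂ) ^ y * Complex.exp (I * m * y)) * q ^ j := by
      intro j
      rw [neg_pow, ← Complex.exp_nat_mul, hqdef, ← Complex.exp_nat_mul]
      have hkey : Complex.exp (Real.pi * I * j * (1 / (2 * (n : ℂ) + 1) + 1)) *
          Complex.exp ((y : ℂ) * (I * (2 * Real.pi * j / (2 * (n : ℂ) + 1) + m)))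
          = Complex.exp (I * m * y) *
            Complex.exp ((j : ℂ) * (2 * Real.pi * I * ((y : ℂ) + n + 1) / (2 * (n : ℂ) + 1))) := by
        rw [← Complex.exp_add, ← Complex.exp_add]
        congr 1
        field_simp
        ring
      calc Complex.exp (Real.pi * I * j * (1 / (2 * (n : ℂ) + 1) + 1)) *
            ((-1 : ℂ) ^ y * Complex.exp ((y : ℂ) * (I * (2 * Real.pi * j / (2 * (n : ℂ) + 1) + m))))
          = (-1 : ℂ) ^ y * (Complex.exp (Real.pi * I * j * (1 / (2 * (n : ℂ) + 1) + 1)) *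
              Complex.exp ((y : ℂ) * (I * (2 * Real.pi * j / (2 * (n : ℂ) + 1) + m)))) := by ring
        _ = _ := by rw [hkey]; ring
    calc (∑ j ∈ Finset.range (2 * n + 1),
          Complex.exp (Real.pi * I * j * (1 / (2 * (n : ℂ) + 1) + 1)) *
            ((-Complex.exp (I * (2 * Real.pi * j / (2 * (n : ℂ) + 1) + m))) ^ y /
              ((y : ℂ) + a) ^ (-k)))
        = ∑ j ∈ Finset.range (2 * n + 1),
            ((-1 : ℂ) ^ y * Complex.exp (I * m * y)) * q ^ j / ((y : ℂ) + a) ^ (-k) := by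
          refine Finset.sum_congr rfl fun j _ => ?_
          rw [← mul_div_assoc, hq j]
      _ = ((-1 : ℂ) ^ y * Complex.exp (I * m * y)) * (∑ j ∈ Finset.range (2 * n + 1), q ^ j) /
            ((y : ℂ) + a) ^ (-k) := by
          rw [← Finset.sum_div, ← Finset.mul_sum]
      _ = F y := by
          by_cases hd : (2 * n + 1) ∣ (y + n + 1)
          · obtain ⟨t, ht⟩ := hd
            have hyc : (y : ℂ) + n + 1 = (t : ℂ) * (2 * (n : ℂ) + 1) := by
              have := congrArg (fun x : ℕ => (x : ℂ)) ht
              push_cast at this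
              linear_combination this
            have hq1 : q = 1 := by
              rw [hqdef]
              have harg : 2 * (Real.pi : ℂ) * I * ((y : ℂ) + n + 1) / (2 * (n : ℂ) + 1)
                  = (t : ℂ) * (2 * Real.pi * I) := by
                rw [hyc]
                field_simp
              rw [harg]
              exact_mod_cast Complex.exp_nat_mul_two_pi_mul_I t
            have hd' : (2 * n + 1) ∣ (y + n + 1) := ⟨t, ht⟩
            simp only [hF, if_pos hd']
            rw [hq1]
            simp only [one_pow, Finset.sum_const, Finset.card_range, nsmul_eq_mul, mul_one]
            ring
          · have hqne : q ≠ 1 := by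
              intro h1
              rw [hqdef, Complex.exp_eq_one_iff] at h1
              obtain ⟨t, ht⟩ := h1
              rw [div_eq_iff hN0] at ht
              have hne2 : (2 * (Real.pi : ℂ) * I) ≠ 0 := by
                simp [hπ, I_ne_zero]
              have h2 : (y : ℂ) + n + 1 = (t : ℂ) * (2 * (n : ℂ) + 1) := by
                apply mul_left_cancel₀ hne2
                linear_combination ht
              have h3 : (y + n + 1 : ℤ) = t * (2 * n + 1) := by exact_mod_cast h2
              exact hd (Int.natCast_dvd_natCast.1 ⟨t, by push_cast; linear_combination h3⟩)
            have hqN : q ^ (2 * n + 1) = 1 := by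
              rw [hqdef, ← Complex.exp_nat_mul]
              have : ((2 * n + 1 : ℕ) : ℂ) *
                  (2 * Real.pi * I * ((y : ℂ) + n + 1) / (2 * (n : ℂ) + 1))
                  = ((y + n + 1 : ℕ) : ℂ) * (2 * Real.pi * I) := by
                rw [hNn]; push_cast; field_simp
              rw [this]
              exact Complex.exp_nat_mul_two_pi_mul_I _
            rw [geom_sum_eq hqne, hqN]
            rw [hF]
            simp [if_neg hd]
  -- summability of each series
  have hsum : ∀ j ∈ Finset.range (2 * n + 1),
      Summable (fun y : ℕ =>
        Complex.exp (Real.pi * I * j * (1 / (2 * (n : ℂ) + 1) + 1)) *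
          ((-Complex.exp (I * (2 * Real.pi * j / (2 * (n : ℂ) + 1) + m))) ^ y /
            ((y : ℂ) + a) ^ (-k))) :=
    fun j _ => (summable_lerch _ a k (hznorm j) ha).mul_left _
  have hinj : Function.Injective (fun w : ℕ => (2 * n + 1) * w + n) := by
    intro w1 w2 h
    simp only [] at h
    exact Nat.eq_of_mul_eq_mul_left (by omega) (Nat.add_right_cancel h)
  have hsupp : Function.support F ⊆ Set.range (fun w : ℕ => (2 * n + 1) * w + n) := by
    intro y hy
    rw [Function.mem_support] at hy
    have hd : (2 * n + 1) ∣ (y + n + 1) := by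
      by_contra hd
      exact hy (by simp [hF, if_neg hd])
    obtain ⟨t, ht⟩ := hd
    rcases t with _ | s
    · simp at ht
    · refine ⟨s, ?_⟩
      show (2 * n + 1) * s + n = y
      have hp : (2 * n + 1) * s + (2 * n + 1) = y + n + 1 := by rw [ht]; ring
      obtain ⟨A, hA⟩ : ∃ A, A = (2 * n + 1) * s := ⟨_, rfl⟩
      rw [← hA] at hp ⊢
      omega
  -- step 4 : evaluation on the support
  have step4 : ∀ w : ℕ, F ((2 * n + 1) * w + n)
      = (-1 : ℂ) ^ n * (2 * (n : ℂ) + 1) ^ (k + 1) * Complex.exp (I * m * n) *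
        ((-Complex.exp (I * m * (2 * (n : ℂ) + 1))) ^ w /
          ((w : ℂ) + (a + n) / (2 * (n : ℂ) + 1)) ^ (-k)) := by
    intro w
    have hd' : (2 * n + 1) ∣ (((2 * n + 1) * w + n) + n + 1) := ⟨w + 1, by ring⟩
    simp only [hF, if_pos hd']
    set u : ℂ := (w : ℂ) + (a + n) / (2 * (n : ℂ) + 1) with hu
    have h1 : u = (w : ℂ) + ((((2 * n + 1 : ℝ))⁻¹ : ℝ) : ℂ) * (a + (n : ℂ)) := by
      rw [hu]; push_cast; ring
    have hure : 0 < u.re := by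
      rw [h1, Complex.add_re, Complex.natCast_re, re_ofReal_mul, Complex.add_re,
        Complex.natCast_re]
      have h2 : (0:ℝ) < (2 * n + 1 : ℝ)⁻¹ := by positivity
      have h3 : (0:ℝ) ≤ (w : ℝ) := w.cast_nonneg
      nlinarith [Nat.cast_nonneg (α := ℝ) n]
    have hune : u ≠ 0 := by
      intro h0
      rw [h0] at hure
      simp at hure
    have hmulu : ((((2 * n + 1) * w + n : ℕ)) : ℂ) + a = (((2 * n + 1 : ℕ) : ℝ) : ℂ) * u := by
      rw [hu]
      push_cast
      field_simp
      ring
    have hsplit : ((((2 * n + 1 : ℕ) : ℝ) : ℂ) * u) ^ (-k)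
        = (((2 * n + 1 : ℕ) : ℝ) : ℂ) ^ (-k) * u ^ (-k) :=
      cpow_real_mul _ (by positivity) u hune (-k)
    rw [hmulu, hsplit]
    have hm1 : ((-1 : ℂ)) ^ ((2 * n + 1) * w + n) = (-1 : ℂ) ^ w * (-1 : ℂ) ^ n := by
      rw [pow_add, pow_mul, show ((-1 : ℂ)) ^ (2 * n + 1) = -1 from Odd.neg_one_pow ⟨n, by ring⟩]
    have hexp : Complex.exp (I * m * ((((2 * n + 1) * w + n : ℕ)) : ℂ))
        = Complex.exp (I * m * (2 * (n : ℂ) + 1)) ^ w * Complex.exp (I * m * (n : ℂ)) := by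
      rw [← Complex.exp_nat_mul, ← Complex.exp_add]
      congr 1
      push_cast
      ring
    rw [hm1, hexp, neg_pow]
    have hNR : (((2 * n + 1 : ℕ) : ℝ) : ℂ) = 2 * (n : ℂ) + 1 := by push_cast; ring
    rw [hNR, hNn]
    rw [cpow_add _ _ hN0, cpow_one, cpow_neg (2 * (n : ℂ) + 1) k]
    have hNk0 : (2 * (n : ℂ) + 1) ^ k ≠ 0 := by
      simp [Complex.cpow_eq_zero_iff, hN0]
    have huk0 : u ^ (-k) ≠ 0 := by
      simp [Complex.cpow_eq_zero_iff, hune]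
    field_simp
    ring
  -- assembling everything
  simp only [lerchPhi]
  calc (∑ j ∈ Finset.range (2 * n + 1),
        Complex.exp (Real.pi * I * j * (1 / (2 * (n : ℂ) + 1) + 1)) *
          ∑' y : ℕ, (-Complex.exp (I * (2 * Real.pi * j / (2 * (n : ℂ) + 1) + m))) ^ y /
            ((y : ℂ) + a) ^ (-k))
      = ∑ j ∈ Finset.range (2 * n + 1), ∑' y : ℕ,
          Complex.exp (Real.pi * I * j * (1 / (2 * (n : ℂ) + 1) + 1)) *
            ((-Complex.exp (I * (2 * Real.pi * j / (2 * (n : ℂ) + 1) + m))) ^ y /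
              ((y : ℂ) + a) ^ (-k)) :=
        Finset.sum_congr rfl fun j _ => (tsum_mul_left).symm
    _ = ∑' y : ℕ, ∑ j ∈ Finset.range (2 * n + 1),
          Complex.exp (Real.pi * I * j * (1 / (2 * (n : ℂ) + 1) + 1)) *
            ((-Complex.exp (I * (2 * Real.pi * j / (2 * (n : ℂ) + 1) + m))) ^ y /
              ((y : ℂ) + a) ^ (-k)) := (Summable.tsum_finsetSum hsum).symm
    _ = ∑' y : ℕ, F y := tsum_congr step2
    _ = ∑' w : ℕ, F ((2 * n + 1) * w + n) := (hinj.tsum_eq hsupp).symm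
    _ = ∑' w : ℕ, (-1 : ℂ) ^ n * (2 * (n : ℂ) + 1) ^ (k + 1) * Complex.exp (I * m * n) *
          ((-Complex.exp (I * m * (2 * (n : ℂ) + 1))) ^ w /
            ((w : ℂ) + (a + n) / (2 * (n : ℂ) + 1)) ^ (-k)) := tsum_congr step4
    _ = (-1 : ℂ) ^ n * (2 * (n : ℂ) + 1) ^ (k + 1) * Complex.exp (I * m * n) *
          ∑' w : ℕ, ((-Complex.exp (I * m * (2 * (n : ℂ) + 1))) ^ w /
            ((w : ℂ) + (a + n) / (2 * (n : ℂ) + 1)) ^ (-k)) := tsum_mul_left
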